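/- The 5×5 parameter-free metric Θ^(5)(γ) given by [[1, 2iγ, 0, 4iγ³, 0], [-2iγ, 1+6γ², i√6γ(1+2γ²), 4γ⁴, 4iγ³], [0, -i√6γ(1+2γ²), 1+8γ²+8γ⁴, i√6γ(1+2γ²), 0], [-4iγ³, 4γ⁴, -i√6γ(1+2γ²), 1+6γ², 2iγ], [0, -4iγ³, 0, -2iγ, 1]] satisfies H† Θ = Θ H with H the N=5 complexified Bose-Hubbard Hamiltonian [[-4iγ,2,0,0,0],[2,-2iγ,√6,0,0],[0,√6,0,√6,0],[0,0,√6,2iγ,2],[0,0,0,2,4iγ]]. -/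
import Mathlib


open Complex Matrix

noncomputable def H5 (γ : ℝ) : Matrix (Fin 5) (Fin 5) ℂ :=
  !![-4 * I * γ, 2, 0, 0, 0;
     2, -2 * I * γ, (Real.sqrt 6 : ℂ), 0, 0;
     0, (Real.sqrt 6 : ℂ), 0, (Real.sqrt 6 : ℂ), 0;
     0, 0, (Real.sqrt 6 : ℂ), 2 * I * γ, 2;
     0, 0, 0, 2, 4 * I * γ]

noncomputable def Theta5 (γ : ℝ) : Matrix (Fin 5) (Fin 5) ℂ :=
  !![1, 2 * I * γ, 0, 4 * I * γ ^ 3, 0;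
     -(2 * I * γ), ((1 + 6 * γ ^ 2 : ℝ) : ℂ), I * Real.sqrt 6 * γ * (1 + 2 * (γ : ℂ) ^ 2),
       ((4 * γ ^ 4 : ℝ) : ℂ), 4 * I * γ ^ 3;
     0, -(I * Real.sqrt 6 * γ * (1 + 2 * (γ : ℂ) ^ 2)), ((1 + 8 * γ ^ 2 + 8 * γ ^ 4 : ℝ) : ℂ),
       I * Real.sqrt 6 * γ * (1 + 2 * (γ : ℂ) ^ 2), 0;
     -(4 * I * γ ^ 3), ((4 * γ ^ 4 : ℝ) : ℂ), -(I * Real.sqrt 6 * γ * (1 + 2 * (γ : ℂ) ^ 2)),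
       ((1 + 6 * γ ^ 2 : ℝ) : ℂ), 2 * I * γ;
     0, -(4 * I * γ ^ 3), 0, -(2 * I * γ), 1]

set_option maxHeartbeats 2000000 in
theorem stmt16 (γ : ℝ) : (H5 γ)ᴴ * Theta5 γ = Theta5 γ * H5 γ := by
  have hs : ((Real.sqrt 6 : ℝ) : ℂ) ^ 2 = 6 := by
    rw [← Complex.ofReal_pow, Real.sq_sqrt (by norm_num)]; norm_num
  ext i j
  fin_cases i <;> fin_cases j <;>
    · simp [H5, Theta5, Matrix.mul_apply, Fin.sum_univ_five, Complex.conj_ofReal,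
        Matrix.vecHead, Matrix.vecTail]
      try push_cast
      try ring_nf
      try simp only [Complex.I_sq, hs, Matrix.vecHead, Matrix.vecTail, Function.comp_apply,
        map_ofNat, neg_neg]
      try ring_nf
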